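/- Let f : ℝ×ℝ → ℝ be a smooth function satisfying the compatibility condition f_t = −4 f_{xxx} everywhere, and let c₀, d₀ be real constants. Define c(t) = −4∫₀^t f_{xx}(0,t') dt' + c₀, d(t) = −4∫₀^t f_x(0,t') dt' + d₀, and φ(x,t) = ∫₀^x ∫₀^{x'} f(x'',t) dx'' dx' + c(t)x + d(t). Then φ satisfies φ_{xx} = f and φ_t = −4 φ_{xxx} everywhere. -/

import Mathlib

open intervalIntegral Set Metric


/-- Partial derivative with respect to the first variable `x`. -/
noncomputable def px (f : ℝ × ℝ → ℝ) : ℝ × ℝ → ℝ :=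
  fun p => deriv (fun x => f (x, p.2)) p.1

/-- Partial derivative with respect to the second variable `t`. -/
noncomputable def pt (f : ℝ × ℝ → ℝ) : ℝ × ℝ → ℝ :=
  fun p => deriv (fun t => f (p.1, t)) p.2

lemma px_eq_fderiv {f : ℝ × ℝ → ℝ} (hf : ContDiff ℝ (⊤ : ℕ∞) f) (p : ℝ × ℝ) :
    px f p = fderiv ℝ f p (1, 0) := by
  have h1 : HasDerivAt (fun x : ℝ => (x, p.2)) ((1 : ℝ), (0 : ℝ)) p.1 :=
    (hasDerivAt_id p.1).prodMk (hasDerivAt_const p.1 p.2)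
  have := ((hf.differentiable (by simp) p).hasFDerivAt).comp_hasDerivAt p.1 h1
  simpa [px, Function.comp_def] using this.deriv

lemma px_contDiff {f : ℝ × ℝ → ℝ} (hf : ContDiff ℝ (⊤ : ℕ∞) f) : ContDiff ℝ (⊤ : ℕ∞) (px f) := by
  have : ContDiff ℝ (⊤ : ℕ∞) (fun p : ℝ × ℝ => fderiv ℝ f p (1, 0)) :=
    (hf.fderiv_right (by simp)).clm_apply contDiff_const
  have heq : px f = fun p => fderiv ℝ f p (1, 0) := funext fun p => px_eq_fderiv hf p
  rw [heq]; exact this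

lemma slice_x_hasDerivAt {f : ℝ × ℝ → ℝ} (hf : ContDiff ℝ (⊤ : ℕ∞) f) (p : ℝ × ℝ) :
    HasDerivAt (fun x => f (x, p.2)) (px f p) p.1 := by
  have : DifferentiableAt ℝ (fun x => f (x, p.2)) p.1 :=
    ((hf.differentiable (by simp)) p).comp p.1
      ((differentiableAt_id).prodMk (differentiableAt_const p.2))
  exact this.hasDerivAt

lemma slice_t_hasDerivAt {f : ℝ × ℝ → ℝ} (hf : ContDiff ℝ (⊤ : ℕ∞) f) (p : ℝ × ℝ) :
    HasDerivAt (fun t => f (p.1, t)) (pt f p) p.2 := by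
  have : DifferentiableAt ℝ (fun t => f (p.1, t)) p.2 :=
    ((hf.differentiable (by simp)) p).comp p.2
      ((differentiableAt_const p.1).prodMk differentiableAt_id)
  exact this.hasDerivAt

/-- Differentiation under the interval integral sign. -/
lemma hasDerivAt_param (g g' : ℝ × ℝ → ℝ) (hg : Continuous g) (hg' : Continuous g')
    (hdiff : ∀ q : ℝ × ℝ, HasDerivAt (fun s => g (q.1, s)) (g' q) q.2)
    (x t : ℝ) :
    HasDerivAt (fun s => ∫ u in (0:ℝ)..x, g (u, s)) (∫ u in (0:ℝ)..x, g' (u, t)) t := by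
  obtain ⟨C, hC⟩ : ∃ C, ∀ q ∈ (uIcc (0:ℝ) x) ×ˢ (closedBall t 1), ‖g' q‖ ≤ C :=
    (isCompact_uIcc.prod (isCompact_closedBall t 1)).exists_bound_of_continuousOn
      hg'.continuousOn
  have key := intervalIntegral.hasDerivAt_integral_of_dominated_loc_of_deriv_le
    (F := fun s u => g (u, s)) (F' := fun s u => g' (u, s)) (x₀ := t) (a := (0:ℝ)) (b := x)
    (bound := fun _ => C) (μ := MeasureTheory.volume) (ball_mem_nhds t one_pos)
    (Filter.Eventually.of_forall fun s =>
      ((hg.comp (continuous_id.prodMk continuous_const)).aestronglyMeasurable))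
    ((hg.comp (continuous_id.prodMk continuous_const)).intervalIntegrable 0 x)
    ((hg'.comp (continuous_id.prodMk continuous_const)).aestronglyMeasurable)
    (Filter.Eventually.of_forall fun u hu s hs =>
      hC (u, s) ⟨uIoc_subset_uIcc hu, ball_subset_closedBall hs⟩)
    (intervalIntegrable_const)
    (Filter.Eventually.of_forall fun u _ s _ => hdiff (u, s))
  exact key.2

lemma pt_eq_fderiv {f : ℝ × ℝ → ℝ} (hf : ContDiff ℝ (⊤ : ℕ∞) f) (p : ℝ × ℝ) :
    pt f p = fderiv ℝ f p (0, 1) := by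
  have h1 : HasDerivAt (fun t : ℝ => (p.1, t)) ((0 : ℝ), (1 : ℝ)) p.2 :=
    (hasDerivAt_const p.2 p.1).prodMk (hasDerivAt_id p.2)
  have := ((hf.differentiable (by simp) p).hasFDerivAt).comp_hasDerivAt p.2 h1
  simpa [pt, Function.comp_def] using this.deriv

lemma pt_contDiff {f : ℝ × ℝ → ℝ} (hf : ContDiff ℝ (⊤ : ℕ∞) f) : ContDiff ℝ (⊤ : ℕ∞) (pt f) := by
  have : ContDiff ℝ (⊤ : ℕ∞) (fun p : ℝ × ℝ => fderiv ℝ f p (0, 1)) :=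
    (hf.fderiv_right (by simp)).clm_apply contDiff_const
  have heq : pt f = fun p => fderiv ℝ f p (0, 1) := funext fun p => pt_eq_fderiv hf p
  rw [heq]; exact this

lemma cont_primitive {g : ℝ × ℝ → ℝ} (hg : Continuous g) :
    Continuous fun p : ℝ × ℝ => ∫ u in (0:ℝ)..p.1, g (u, p.2) := by
  have h1 : Continuous (Function.uncurry fun (p : ℝ × ℝ) (u : ℝ) => g (u, p.2)) :=
    hg.comp (continuous_snd.prodMk (continuous_snd.comp continuous_fst))
  exact intervalIntegral.continuous_parametric_intervalIntegral_of_continuous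
    (μ := MeasureTheory.volume) (a₀ := (0:ℝ)) h1 continuous_fst

lemma primitive_hasDerivAt {g : ℝ → ℝ} (hg : Continuous g) (x : ℝ) :
    HasDerivAt (fun y => ∫ u in (0:ℝ)..y, g u) (g x) x :=
  (hg.integral_hasStrictDerivAt 0 x).hasDerivAt

lemma integral_px_deriv {g : ℝ × ℝ → ℝ} (hg : ContDiff ℝ (⊤ : ℕ∞) g) (t a b : ℝ) :
    (∫ u in a..b, px g (u, t)) = g (b, t) - g (a, t) :=
  intervalIntegral.integral_eq_sub_of_hasDerivAt (f := fun u => g (u, t))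
    (f' := fun u => px g (u, t)) (fun u _ => slice_x_hasDerivAt hg (u, t))
    (Continuous.intervalIntegrable
      ((px_contDiff hg).continuous.comp (continuous_id.prodMk continuous_const)) a b)

/-- Zero eigenvalue case: with `c(t) = −4∫₀ᵗ f_{xx}(0,t')dt' + c₀`,
`d(t) = −4∫₀ᵗ f_x(0,t')dt' + d₀` and
`φ(x,t) = ∫₀ˣ∫₀^{x'} f(x'',t)dx''dx' + c(t)x + d(t)`, the function `φ` satisfies
`φ_{xx} = f` and `φ_t = −4φ_{xxx}`. -/
theorem zero_eigenvalue_solution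
    (f : ℝ × ℝ → ℝ) (hf : ContDiff ℝ (⊤ : ℕ∞) f)
    (hcomp : ∀ p : ℝ × ℝ, pt f p = -4 * (px^[3] f) p)
    (c₀ d₀ : ℝ) (c d : ℝ → ℝ) (φ : ℝ × ℝ → ℝ)
    (hc : ∀ t : ℝ, c t = -4 * (∫ t' in (0:ℝ)..t, (px^[2] f) (0, t')) + c₀)
    (hd : ∀ t : ℝ, d t = -4 * (∫ t' in (0:ℝ)..t, px f (0, t')) + d₀)
    (hφ : ∀ x t : ℝ,
      φ (x, t) = (∫ x' in (0:ℝ)..x, ∫ x'' in (0:ℝ)..x', f (x'', t)) + c t * x + d t) :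
    (∀ p : ℝ × ℝ, (px^[2] φ) p = f p) ∧
    (∀ p : ℝ × ℝ, pt φ p = -4 * (px^[3] φ) p) := by
  have hfc : Continuous f := hf.continuous
  have hpxfc : Continuous (px f) := (px_contDiff hf).continuous
  have hpx2fc : Continuous (px (px f)) := (px_contDiff (px_contDiff hf)).continuous
  have hpxf : ContDiff ℝ (⊤ : ℕ∞) (px f) := px_contDiff hf
  have hpx2f : ContDiff ℝ (⊤ : ℕ∞) (px (px f)) := px_contDiff hpxf
  have hptf : ContDiff ℝ (⊤ : ℕ∞) (pt f) := pt_contDiff hf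
  have hF₁c : Continuous fun p : ℝ × ℝ => ∫ u in (0:ℝ)..p.1, f (u, p.2) := cont_primitive hfc
  -- first x-derivative of φ
  have hpxφ : ∀ x t : ℝ, px φ (x, t) = (∫ u in (0:ℝ)..x, f (u, t)) + c t := by
    intro x t
    have h2 : (fun y => φ (y, t)) =
        fun y => (∫ x' in (0:ℝ)..y, ∫ u in (0:ℝ)..x', f (u, t)) + c t * y + d t :=
      funext fun y => hφ y t
    have hcont : Continuous fun x' : ℝ => ∫ u in (0:ℝ)..x', f (u, t) :=
      by fun_prop
    have h1 : HasDerivAt (fun y => ∫ x' in (0:ℝ)..y, ∫ u in (0:ℝ)..x', f (u, t))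
        (∫ u in (0:ℝ)..x, f (u, t)) x := primitive_hasDerivAt hcont x
    have h3 : HasDerivAt (fun y => φ (y, t))
        ((∫ u in (0:ℝ)..x, f (u, t)) + c t) x := by
      rw [h2]
      have h4 := (h1.add ((hasDerivAt_id x).const_mul (c t))).add_const (d t)
      simpa using h4
    exact h3.deriv
  -- second x-derivative of φ
  have hpx2φ : ∀ p : ℝ × ℝ, px (px φ) p = f p := by
    rintro ⟨x, t⟩
    have h2 : (fun y => px φ (y, t)) = fun y => (∫ u in (0:ℝ)..y, f (u, t)) + c t :=
      funext fun y => hpxφ y t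
    have h1 : HasDerivAt (fun y => (∫ u in (0:ℝ)..y, f (u, t)) + c t) (f (x, t)) x :=
      (primitive_hasDerivAt (g := fun u => f (u, t)) (by fun_prop) x).add_const (c t)
    show deriv (fun y => px φ (y, t)) x = f (x, t)
    rw [h2]; exact h1.deriv
  -- third x-derivative of φ
  have hpx3φ : ∀ p : ℝ × ℝ, px (px (px φ)) p = px f p := by
    rintro ⟨x, t⟩
    have h2 : (fun y => px (px φ) (y, t)) = fun y => f (y, t) :=
      funext fun y => hpx2φ (y, t)
    show deriv (fun y => px (px φ) (y, t)) x = px f (x, t)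
    rw [h2]; rfl
  -- t-derivative of φ
  have hptφ : ∀ x t : ℝ, pt φ (x, t) = -4 * px f (x, t) := by
    intro x t
    have hcd : HasDerivAt c (-4 * px (px f) (0, t)) t := by
      have h0 : HasDerivAt (fun s => ∫ t' in (0:ℝ)..s, px (px f) (0, t'))
          (px (px f) (0, t)) t :=
        primitive_hasDerivAt (g := fun t' => px (px f) (0, t')) (by fun_prop) t
      have heq : c = fun s => -4 * (∫ t' in (0:ℝ)..s, px (px f) (0, t')) + c₀ :=
        funext fun s => hc s
      rw [heq]
      exact (h0.const_mul (-4)).add_const c₀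
    have hdd : HasDerivAt d (-4 * px f (0, t)) t := by
      have h0 : HasDerivAt (fun s => ∫ t' in (0:ℝ)..s, px f (0, t'))
          (px f (0, t)) t :=
        primitive_hasDerivAt (g := fun t' => px f (0, t')) (by fun_prop) t
      have heq : d = fun s => -4 * (∫ t' in (0:ℝ)..s, px f (0, t')) + d₀ :=
        funext fun s => hd s
      rw [heq]
      exact (h0.const_mul (-4)).add_const d₀
    have hinner : ∀ q : ℝ × ℝ, HasDerivAt (fun s => ∫ u in (0:ℝ)..q.1, f (u, s))
        (∫ u in (0:ℝ)..q.1, pt f (u, q.2)) q.2 := fun q =>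
      hasDerivAt_param f (pt f) hfc hptf.continuous (fun q' => slice_t_hasDerivAt hf q') q.1 q.2
    have houter : HasDerivAt (fun s => ∫ x' in (0:ℝ)..x, ∫ u in (0:ℝ)..x', f (u, s))
        (∫ x' in (0:ℝ)..x, ∫ u in (0:ℝ)..x', pt f (u, t)) t :=
      hasDerivAt_param (fun p => ∫ u in (0:ℝ)..p.1, f (u, p.2))
        (fun p => ∫ u in (0:ℝ)..p.1, pt f (u, p.2)) hF₁c (cont_primitive hptf.continuous)
        (fun q => hinner q) x t
    have hval : (∫ x' in (0:ℝ)..x, ∫ u in (0:ℝ)..x', pt f (u, t))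
        = -4 * (px f (x, t) - px f (0, t)) + (4 * px (px f) (0, t)) * x := by
      have e1 : ∀ x' : ℝ, (∫ u in (0:ℝ)..x', pt f (u, t))
          = -4 * (px (px f) (x', t) - px (px f) (0, t)) := by
        intro x'
        have e0 : (∫ u in (0:ℝ)..x', pt f (u, t))
            = ∫ u in (0:ℝ)..x', -4 * px (px (px f)) (u, t) :=
          intervalIntegral.integral_congr fun u _ => hcomp (u, t)
        rw [e0, intervalIntegral.integral_const_mul, integral_px_deriv hpx2f]
      rw [intervalIntegral.integral_congr
        (g := fun x' => -4 * (px (px f) (x', t) - px (px f) (0, t))) (fun x' _ => e1 x')]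
      have hi1 : IntervalIntegrable (fun x' => px (px f) (x', t)) MeasureTheory.volume 0 x :=
        Continuous.intervalIntegrable (by fun_prop) 0 x
      rw [intervalIntegral.integral_const_mul,
        intervalIntegral.integral_sub hi1 intervalIntegrable_const,
        integral_px_deriv hpxf, intervalIntegral.integral_const]
      simp only [smul_eq_mul, sub_zero]
      ring
    have heq : (fun s => φ (x, s)) = fun s =>
        (∫ x' in (0:ℝ)..x, ∫ u in (0:ℝ)..x', f (u, s)) + c s * x + d s :=
      funext fun s => hφ x s
    have htotal : HasDerivAt (fun s => φ (x, s))
        ((∫ x' in (0:ℝ)..x, ∫ u in (0:ℝ)..x', pt f (u, t)) + (-4 * px (px f) (0, t)) * x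
          + (-4 * px f (0, t))) t := by
      rw [heq]
      exact (houter.add (hcd.mul_const x)).add hdd
    show deriv (fun s => φ (x, s)) t = -4 * px f (x, t)
    rw [htotal.deriv, hval]; ring
  refine ⟨fun p => hpx2φ p, ?_⟩
  rintro ⟨x, t⟩
  show pt φ (x, t) = -4 * px (px (px φ)) (x, t)
  rw [hpx3φ (x, t)]
  exact hptφ x t
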